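/- If σ is a permutation of a finite set A (with |A| ≥ 1) fixing some phylogenetic tree on A, and the restriction σ' of σ to the complement A' of a largest cycle c of σ is considered, where σ has more than one cycle, then the set of σ-fixed phylogenetic trees on A is in bijection with the set of pairs (γ', e) where γ' is a σ'-fixed phylogenetic tree on A' and e is one of the 2|A'| − 1 edges of γ'. -/

import Mathlib

universe u
variable {α β : Type u}

/-- Rooted binary trees with labelled leaves (embedded). -/
inductive RTree (α : Type u) : Type u
  | leaf : α → RTree α
  | node : RTree α → RTree α → RTree α

namespace RTree

def relabel (f : α → β) : RTree α → RTree β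
  | .leaf a => .leaf (f a)
  | .node l r => .node (l.relabel f) (r.relabel f)

def leaves : RTree α → Multiset α
  | .leaf a => {a}
  | .node l r => l.leaves + r.leaves

/-- Identification of non-embedded trees: the two children of a node are unordered. -/
inductive TEquiv : RTree α → RTree α → Prop
  | leaf (a : α) : TEquiv (.leaf a) (.leaf a)
  | node {l r l' r'} : TEquiv l l' → TEquiv r r' → TEquiv (.node l r) (.node l' r')
  | swap {l r l' r'} : TEquiv l r' → TEquiv r l' → TEquiv (.node l r) (.node l' r')

theorem TEquiv.leaves_eq {t t' : RTree α} (h : TEquiv t t') : t.leaves = t'.leaves := by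
  induction h with
  | leaf a => rfl
  | node _ _ ih1 ih2 => simp [leaves, ih1, ih2]
  | swap _ _ ih1 ih2 => simp [leaves, ih1, ih2, add_comm]

theorem TEquiv.relabel_congr (f : α → β) {t t' : RTree α} (h : TEquiv t t') :
    TEquiv (t.relabel f) (t'.relabel f) := by
  induction h with
  | leaf a => exact .leaf _
  | node _ _ ih1 ih2 => exact .node ih1 ih2
  | swap _ _ ih1 ih2 => exact .swap ih1 ih2

end RTree

/-- Phylogenetic (rooted, non-embedded, leaf-labelled) trees with labels in `α`. -/
def PTree (α : Type u) : Type u := Quot (@RTree.TEquiv α)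

namespace PTree

def leaves : PTree α → Multiset α :=
  Quot.lift RTree.leaves fun _ _ h => h.leaves_eq

def relabel (f : α → α) : PTree α → PTree α :=
  Quot.lift (fun t => Quot.mk _ (t.relabel f)) fun _ _ h => Quot.sound (h.relabel_congr f)

end PTree

/-- The phylogenetic trees with leaf label set `A` that are fixed by the relabelling
action of `σ`. -/
def fixedTrees (σ : Equiv.Perm α) (A : Finset α) : Set (PTree α) :=
  {t | t.leaves = A.val ∧ t.relabel σ = t}

/-- The orbit (cycle) of `a` under the permutation `σ`, as a finset. -/
noncomputable def orbitF [Fintype α] (σ : Equiv.Perm α) (a : α) : Finset α := by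
  classical exact Finset.univ.filter fun x => σ.SameCycle a x

/-- `∏_{i=2}^{ℓ} (2(λ_i + ⋯ + λ_ℓ) - 1)` where the parts `λ_1 ≥ λ_2 ≥ ⋯ ≥ λ_ℓ` are the
elements of `m` in non-increasing order: equivalently, the factors are `2 s - 1` where `s`
runs over the sums of the `j` smallest parts, `j = 1, …, ℓ - 1`. -/
def prodFormula (m : Multiset ℕ) : ℕ :=
  ∏ j ∈ Finset.range (m.card - 1), (2 * ((m.sort (· ≤ ·)).take (j + 1)).sum - 1)

/-- `z_λ = ∏_m m^{m_m} · m_m!` where `m_m` is the multiplicity of `m`. -/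
def zPart (m : Multiset ℕ) : ℕ :=
  ∏ p ∈ m.toFinset, p ^ m.count p * (m.count p).factorial

section Infra
open RTree

variable {α β : Type u}

theorem RTree.TEquiv.refl : ∀ t : RTree α, TEquiv t t
  | .leaf a => .leaf a
  | .node l r => .node (refl l) (refl r)

theorem RTree.TEquiv.symm {t s : RTree α} (h : TEquiv t s) : TEquiv s t := by
  induction h with
  | leaf a => exact .leaf a
  | node _ _ ih1 ih2 => exact .node ih1 ih2
  | swap _ _ ih1 ih2 => exact .swap ih2 ih1

theorem RTree.TEquiv.trans {t s u : RTree α} (h : TEquiv t s) (h2 : TEquiv s u) :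
    TEquiv t u := by
  induction h generalizing u with
  | leaf a => exact h2
  | node _ _ ih1 ih2 =>
    cases h2 with
    | node g1 g2 => exact .node (ih1 g1) (ih2 g2)
    | swap g1 g2 => exact .swap (ih1 g1) (ih2 g2)
  | swap _ _ ih1 ih2 =>
    cases h2 with
    | node g1 g2 => exact .swap (ih1 g2) (ih2 g1)
    | swap g1 g2 => exact .node (ih1 g2) (ih2 g1)

theorem RTree.tequiv_equivalence : Equivalence (@RTree.TEquiv α) :=
  ⟨TEquiv.refl, TEquiv.symm, TEquiv.trans⟩

theorem RTree.leaves_relabel (f : α → β) (t : RTree α) :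
    (t.relabel f).leaves = t.leaves.map f := by
  induction t with
  | leaf a => rfl
  | node l r ihl ihr => simp [relabel, leaves, ihl, ihr]

theorem RTree.leaves_card_pos (t : RTree α) : 0 < Multiset.card t.leaves := by
  induction t with
  | leaf a => simp [leaves]
  | node l r ihl ihr => simp [leaves]; omega

theorem RTree.eq_leaf_of_leaves_singleton {t : RTree α} {x : α} (h : t.leaves = {x}) :
    t = .leaf x := by
  cases t with
  | leaf a => simpa [leaves] using h
  | node l r =>
    exfalso
    have := congrArg Multiset.card h
    simp [leaves] at this
    have h1 := l.leaves_card_pos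
    have h2 := r.leaves_card_pos
    omega

theorem RTree.relabel_relabel (f : β → α) (g : α → β) (t : RTree α) :
    (t.relabel g).relabel f = t.relabel (f ∘ g) := by
  induction t with
  | leaf a => rfl
  | node l r ihl ihr => simp [relabel, ihl, ihr]

theorem RTree.relabel_id (t : RTree α) : t.relabel id = t := by
  induction t with
  | leaf a => rfl
  | node l r ihl ihr => simp [relabel, ihl, ihr]

namespace PTree

theorem mk_eq_mk {t s : RTree α} :
    Quot.mk RTree.TEquiv t = Quot.mk RTree.TEquiv s ↔ RTree.TEquiv t s := by
  rw [Quot.eq]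
  constructor
  · intro h
    exact (RTree.tequiv_equivalence.eqvGen_iff).mp h
  · intro h
    exact Relation.EqvGen.rel _ _ h

def pnode : PTree α → PTree α → PTree α :=
  Quot.lift (fun l => Quot.lift (fun r => Quot.mk _ (RTree.node l r))
      (fun r r' h => Quot.sound (RTree.TEquiv.node (RTree.TEquiv.refl l) h)))
    (by
      intro l l' h
      apply funext
      intro r
      induction r using Quot.ind with
      | _ r => exact Quot.sound (RTree.TEquiv.node h (RTree.TEquiv.refl r)))

end PTree

end Infra


namespace PTree

variable {α : Type u}

@[simp] theorem leaves_mk (t : RTree α) :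
    PTree.leaves (Quot.mk RTree.TEquiv t) = t.leaves := rfl

@[simp] theorem relabel_mk (f : α → α) (t : RTree α) :
    PTree.relabel f (Quot.mk RTree.TEquiv t) = Quot.mk RTree.TEquiv (t.relabel f) := rfl

@[simp] theorem pnode_mk (l r : RTree α) :
    pnode (Quot.mk RTree.TEquiv l) (Quot.mk RTree.TEquiv r) =
      Quot.mk RTree.TEquiv (RTree.node l r) := rfl

@[simp] theorem leaves_pnode (u v : PTree α) :
    (pnode u v).leaves = u.leaves + v.leaves := by
  induction u using Quot.ind with | _ tu =>
  induction v using Quot.ind with | _ tv =>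
  rfl

theorem relabel_pnode (f : α → α) (u v : PTree α) :
    (pnode u v).relabel f = pnode (u.relabel f) (v.relabel f) := by
  induction u using Quot.ind with | _ tu =>
  induction v using Quot.ind with | _ tv =>
  rfl

theorem pnode_comm (u v : PTree α) : pnode u v = pnode v u := by
  induction u using Quot.ind with | _ tu =>
  induction v using Quot.ind with | _ tv =>
  exact Quot.sound (RTree.TEquiv.swap (RTree.TEquiv.refl tu) (RTree.TEquiv.refl tv))

theorem relabel_comp (f g : α → α) (δ : PTree α) :
    (δ.relabel g).relabel f = δ.relabel (f ∘ g) := by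
  induction δ using Quot.ind with | _ t =>
  show Quot.mk RTree.TEquiv ((t.relabel g).relabel f) = Quot.mk RTree.TEquiv (t.relabel (f ∘ g))
  rw [RTree.relabel_relabel]

theorem relabel_id (δ : PTree α) : δ.relabel id = δ := by
  induction δ using Quot.ind with | _ t =>
  show Quot.mk RTree.TEquiv (t.relabel id) = Quot.mk RTree.TEquiv t
  rw [RTree.relabel_id]

theorem leaves_relabel (f : α → α) (δ : PTree α) :
    (δ.relabel f).leaves = δ.leaves.map f := by
  induction δ using Quot.ind with | _ t =>
  exact RTree.leaves_relabel f t

theorem eq_leaf_of_leaves_singleton {δ : PTree α} {x : α} (h : δ.leaves = {x}) :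
    δ = Quot.mk RTree.TEquiv (RTree.leaf x) := by
  induction δ using Quot.ind with | _ t =>
  have := RTree.eq_leaf_of_leaves_singleton (t := t) (x := x) h
  rw [this]

theorem exists_pnode {δ : PTree α} (h : 2 ≤ Multiset.card δ.leaves) :
    ∃ u v, δ = pnode u v := by
  induction δ using Quot.ind with | _ t =>
  cases t with
  | leaf a => simp [RTree.leaves] at h
  | node l r =>
    exact ⟨Quot.mk _ l, Quot.mk _ r, rfl⟩

/-- The dichotomy for a fixed tree: either both children fixed, or swapped. -/
theorem pnode_eq_pnode {u v u' v' : PTree α} (h : pnode u v = pnode u' v') :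
    (u = u' ∧ v = v') ∨ (u = v' ∧ v = u') := by
  induction u using Quot.ind with | _ tu =>
  induction v using Quot.ind with | _ tv =>
  induction u' using Quot.ind with | _ tu' =>
  induction v' using Quot.ind with | _ tv' =>
  have h' : RTree.TEquiv (RTree.node tu tv) (RTree.node tu' tv') := mk_eq_mk.mp h
  cases h' with
  | node h1 h2 => exact Or.inl ⟨Quot.sound h1, Quot.sound h2⟩
  | swap h1 h2 => exact Or.inr ⟨Quot.sound h1, Quot.sound h2⟩

variable [DecidableEq α]

/-- The leaf label set of a tree. -/
def leavesFin (δ : PTree α) : Finset α := δ.leaves.toFinset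

@[simp] theorem leavesFin_mk (t : RTree α) :
    leavesFin (Quot.mk RTree.TEquiv t) = t.leaves.toFinset := rfl

/-- Extract the child of the root whose leaf label set is `L` (if unique); junk otherwise. -/
def childAt (L : Finset α) : PTree α → PTree α :=
  Quot.lift
    (fun t => (match t with
      | RTree.leaf a => Quot.mk RTree.TEquiv (RTree.leaf a)
      | RTree.node l r =>
        if l.leaves.toFinset = L ∧ ¬ r.leaves.toFinset = L then Quot.mk RTree.TEquiv l
        else if r.leaves.toFinset = L ∧ ¬ l.leaves.toFinset = L then Quot.mk RTree.TEquiv r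
        else Quot.mk RTree.TEquiv t : Quot (@RTree.TEquiv α)))
    (by
      intro t t' h
      cases h with
      | leaf a => rfl
      | @node l r l' r' h1 h2 =>
        have e1 : l.leaves = l'.leaves := h1.leaves_eq
        have e2 : r.leaves = r'.leaves := h2.leaves_eq
        show @ite (Quot (@RTree.TEquiv α)) _ _ _ _ = @ite (Quot (@RTree.TEquiv α)) _ _ _ _
        simp only [e1, e2]
        split_ifs with hc1 hc2
        · exact Quot.sound h1
        · exact Quot.sound h2
        · exact Quot.sound (RTree.TEquiv.node h1 h2)
      | @swap l r l' r' h1 h2 =>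
        have e1 : l.leaves = r'.leaves := h1.leaves_eq
        have e2 : r.leaves = l'.leaves := h2.leaves_eq
        show @ite (Quot (@RTree.TEquiv α)) _ _ _ _ = @ite (Quot (@RTree.TEquiv α)) _ _ _ _
        simp only [e1, e2]
        by_cases hA : r'.leaves.toFinset = L <;> by_cases hB : l'.leaves.toFinset = L
        · rw [if_neg (by tauto), if_neg (by tauto), if_neg (by tauto), if_neg (by tauto)]
          exact Quot.sound (RTree.TEquiv.swap h1 h2)
        · rw [if_pos ⟨hA, hB⟩, if_neg (by tauto), if_pos ⟨hA, hB⟩]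
          exact Quot.sound h1
        · rw [if_neg (by tauto), if_pos ⟨hB, hA⟩, if_pos ⟨hB, hA⟩]
          exact Quot.sound h2
        · rw [if_neg (by tauto), if_neg (by tauto), if_neg (by tauto), if_neg (by tauto)]
          exact Quot.sound (RTree.TEquiv.swap h1 h2))

theorem childAt_pnode_left {u v : PTree α} {L : Finset α}
    (hu : u.leavesFin = L) (hv : ¬ v.leavesFin = L) :
    childAt L (pnode u v) = u := by
  induction u using Quot.ind with | _ tu =>
  induction v using Quot.ind with | _ tv =>
  show @ite (Quot (@RTree.TEquiv α)) _ _ _ _ = _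
  rw [if_pos ⟨hu, hv⟩]

theorem childAt_pnode_right {u v : PTree α} {L : Finset α}
    (hv : v.leavesFin = L) (hu : ¬ u.leavesFin = L) :
    childAt L (pnode u v) = v := by
  rw [pnode_comm]
  exact childAt_pnode_left hv hu

/-- The leaf label set of the root child containing `a` (junk for a single leaf). -/
def sideOf (a : α) : PTree α → Finset α :=
  Quot.lift
    (fun t => match t with
      | RTree.leaf _ => (∅ : Finset α)
      | RTree.node l r =>
        (if a ∈ l.leaves then l.leaves.toFinset else ∅) ∪
          (if a ∈ r.leaves then r.leaves.toFinset else ∅))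
    (by
      intro t t' h
      cases h with
      | leaf a => rfl
      | @node l r l' r' h1 h2 =>
        have e1 : l.leaves = l'.leaves := h1.leaves_eq
        have e2 : r.leaves = r'.leaves := h2.leaves_eq
        show _ ∪ _ = _ ∪ _
        simp only [e1, e2]
      | @swap l r l' r' h1 h2 =>
        have e1 : l.leaves = r'.leaves := h1.leaves_eq
        have e2 : r.leaves = l'.leaves := h2.leaves_eq
        show _ ∪ _ = _ ∪ _
        simp only [e1, e2]
        exact Finset.union_comm _ _)

theorem sideOf_pnode_left {a : α} {u v : PTree α}
    (hu : a ∈ u.leaves) (hv : a ∉ v.leaves) :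
    sideOf a (pnode u v) = u.leavesFin := by
  induction u using Quot.ind with | _ tu =>
  induction v using Quot.ind with | _ tv =>
  have hu' : a ∈ tu.leaves := hu
  have hv' : a ∉ tv.leaves := hv
  show (if _ then _ else _) ∪ (if _ then _ else _) = _
  rw [if_pos hu', if_neg hv', Finset.union_empty]
  rfl

theorem sideOf_pnode_right {a : α} {u v : PTree α}
    (hv : a ∈ v.leaves) (hu : a ∉ u.leaves) :
    sideOf a (pnode u v) = v.leavesFin := by
  rw [pnode_comm]
  exact sideOf_pnode_left hv hu

end PTree


section Finiteness

variable {α : Type u} [DecidableEq α]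

theorem PTree.finite_of_leaves_eq_aux :
    ∀ (n : ℕ) (s : Multiset α), Multiset.card s = n →
      Set.Finite {δ : PTree α | δ.leaves = s} := by
  intro n
  induction n using Nat.strong_induction_on with
  | _ n ih =>
    intro s hs
    have hsub : {δ : PTree α | δ.leaves = s} ⊆
        (⋃ x ∈ (s.toFinset : Set α), {Quot.mk RTree.TEquiv (RTree.leaf x)}) ∪
        ⋃ m ∈ ((s.powerset.toFinset.filter
            (fun m => m ≠ 0 ∧ m ≠ s)) : Set (Multiset α)),
          Set.image2 PTree.pnode {δ : PTree α | δ.leaves = m}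
            {δ : PTree α | δ.leaves = s - m} := by
      intro δ hδ
      induction δ using Quot.ind with | _ t =>
      have hδ' : t.leaves = s := hδ
      cases t with
      | leaf x =>
        apply Set.mem_union_left
        have hx : x ∈ s := by
          rw [← hδ']
          simp [RTree.leaves]
        refine Set.mem_iUnion₂.mpr ?_
        exact ⟨x, by simpa using hx, rfl⟩
      | node l r =>
        apply Set.mem_union_right
        have hls : l.leaves ≤ s := by
          rw [← hδ']
          exact Multiset.le_iff_exists_add.mpr ⟨r.leaves, rfl⟩
        have hcl := l.leaves_card_pos
        have hcr := r.leaves_card_pos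
        have hne0 : l.leaves ≠ 0 := by
          intro h0
          rw [h0] at hcl
          simp at hcl
        have hnes : l.leaves ≠ s := by
          intro h0
          have : l.leaves + r.leaves = s := hδ'
          rw [h0] at this
          have : r.leaves = 0 := by
            have := congrArg (fun m => m - s) this
            simpa using this
          rw [this] at hcr
          simp at hcr
        refine Set.mem_iUnion₂.mpr ?_
        refine ⟨l.leaves, ?_, ?_⟩
        · simp only [Finset.coe_filter, Set.mem_setOf_eq, Multiset.mem_toFinset,
            Multiset.mem_powerset]
          exact ⟨hls, hne0, hnes⟩
        · apply Set.mem_image2.mpr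
          refine ⟨Quot.mk _ l, rfl, Quot.mk _ r, ?_, rfl⟩
          show PTree.leaves (Quot.mk RTree.TEquiv r) = s - l.leaves
          rw [PTree.leaves_mk, ← hδ']
          show r.leaves = l.leaves + r.leaves - l.leaves
          rw [add_tsub_cancel_left]
    refine Set.Finite.subset (Set.Finite.union ?_ ?_) hsub
    · exact Set.Finite.biUnion (Finset.finite_toSet _)
        (fun x _ => Set.finite_singleton _)
    · refine Set.Finite.biUnion (Finset.finite_toSet _) ?_
      intro m hm
      simp only [Finset.coe_filter, Set.mem_setOf_eq, Multiset.mem_toFinset,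
        Multiset.mem_powerset] at hm
      obtain ⟨hle, hne0, hnes⟩ := hm
      have h1 : Multiset.card m < n := by
        rw [← hs]
        exact Multiset.card_lt_card (lt_of_le_of_ne hle hnes)
      have hpos : 0 < Multiset.card m := Multiset.card_pos.mpr hne0
      have h2 : Multiset.card (s - m) < n := by
        rw [Multiset.card_sub hle]
        omega
      exact Set.Finite.image2 _ (ih _ h1 m rfl) (ih _ h2 _ rfl)

theorem PTree.finite_of_leaves_eq (s : Multiset α) :
    Set.Finite {δ : PTree α | δ.leaves = s} :=
  PTree.finite_of_leaves_eq_aux (Multiset.card s) s rfl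

theorem fixedTrees_finite (σ : Equiv.Perm α) (B : Finset α) :
    (fixedTrees σ B).Finite := by
  apply Set.Finite.subset (PTree.finite_of_leaves_eq B.val)
  intro δ hδ
  exact hδ.1

end Finiteness


section Orbits
set_option linter.unusedSectionVars false

variable {α : Type u} [Fintype α] [DecidableEq α] (τ : Equiv.Perm α)

theorem mem_orbitF {a x : α} : x ∈ orbitF τ a ↔ τ.SameCycle a x := by
  simp [orbitF]

theorem mem_orbitF_iff_pow {a x : α} : x ∈ orbitF τ a ↔ ∃ i : ℕ, (τ ^ i) a = x := by
  rw [mem_orbitF]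
  constructor
  · intro h
    obtain ⟨i, _, hi⟩ := h.exists_pow_eq'
    exact ⟨i, hi⟩
  · rintro ⟨i, hi⟩
    exact ⟨(i : ℤ), by simpa using hi⟩

theorem self_mem_orbitF {a : α} : a ∈ orbitF τ a :=
  (mem_orbitF τ).mpr (Equiv.Perm.SameCycle.refl _ _)

theorem pow_fix {g : Equiv.Perm α} {x : α} (h : g x = x) (n : ℕ) : (g ^ n) x = x := by
  induction n with
  | zero => simp
  | succ n ihn => rw [pow_succ, Equiv.Perm.mul_apply, h, ihn]

theorem pow_mem_of_closed {L : Finset α} (hL : ∀ x ∈ L, τ x ∈ L) {a : α} (ha : a ∈ L) :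
    ∀ i : ℕ, (τ ^ i) a ∈ L := by
  intro i
  induction i with
  | zero => simpa using ha
  | succ n ihn =>
    rw [pow_succ', Equiv.Perm.mul_apply]
    exact hL _ ihn

theorem orbitF_subset_of_closed {L : Finset α} (hL : ∀ x ∈ L, τ x ∈ L) {a : α} (ha : a ∈ L) :
    orbitF τ a ⊆ L := by
  intro x hx
  obtain ⟨i, rfl⟩ := (mem_orbitF_iff_pow τ).mp hx
  exact pow_mem_of_closed τ hL ha i

theorem image_eq_of_closed {B : Finset α} (h : ∀ x ∈ B, τ x ∈ B) : B.image τ = B := by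
  apply Finset.eq_of_subset_of_card_le
  · intro y hy
    obtain ⟨x, hx, rfl⟩ := Finset.mem_image.mp hy
    exact h x hx
  · exact le_of_eq (Finset.card_image_of_injective _ τ.injective).symm

theorem orbitF_closed {a : α} : ∀ x ∈ orbitF τ a, τ x ∈ orbitF τ a := by
  intro x hx
  rw [mem_orbitF] at *
  exact hx.trans ⟨1, by simp⟩

theorem orbitF_image {a : α} : (orbitF τ a).image τ = orbitF τ a :=
  image_eq_of_closed τ (orbitF_closed τ)

theorem orbitF_eq_singleton {a : α} (h : τ a = a) : orbitF τ a = {a} := by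
  apply Finset.Subset.antisymm
  · exact orbitF_subset_of_closed τ
      (by
        intro x hx
        rw [Finset.mem_singleton] at hx ⊢
        rw [hx, h])
      (Finset.mem_singleton_self a)
  · intro x hx
    rw [Finset.mem_singleton] at hx
    rw [hx]
    exact self_mem_orbitF τ

theorem orbit_card_dvd_iff {a : α} {j : ℕ} :
    (τ ^ j) a = a ↔ (orbitF τ a).card ∣ j := by
  by_cases h : τ a = a
  · rw [orbitF_eq_singleton τ h]
    simp only [Finset.card_singleton, one_dvd, iff_true]
    exact pow_fix h j
  · have horb : orbitF τ a = (τ.cycleOf a).support := by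
      ext y
      rw [mem_orbitF, Equiv.Perm.mem_support_cycleOf_iff]
      exact ⟨fun hy => ⟨hy, Equiv.Perm.mem_support.mpr h⟩, fun hy => hy.1⟩
    have hcyc : (τ.cycleOf a).IsCycle := Equiv.Perm.isCycle_cycleOf τ h
    have hmove : (τ.cycleOf a) a ≠ a := by
      rw [Equiv.Perm.cycleOf_apply_self]
      exact h
    rw [horb, ← hcyc.orderOf]
    constructor
    · intro hj
      rw [orderOf_dvd_iff_pow_eq_one, hcyc.pow_eq_one_iff' hmove,
        Equiv.Perm.cycleOf_pow_apply_self]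
      exact hj
    · intro hj
      rw [orderOf_dvd_iff_pow_eq_one] at hj
      have := (hcyc.pow_eq_one_iff' hmove).mp hj
      rw [Equiv.Perm.cycleOf_pow_apply_self] at this
      exact this

theorem pow_apply_cancel {p q : ℕ} {x : α} (hpq : q ≤ p) (h : (τ ^ p) x = (τ ^ q) x) :
    (τ ^ (p - q)) x = x := by
  have h2 : (τ ^ q) ((τ ^ (p - q)) x) = (τ ^ q) x := by
    rw [← Equiv.Perm.mul_apply, ← pow_add]
    rw [Nat.add_sub_cancel' hpq]
    exact h
  exact (τ ^ q).injective h2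

theorem orbit_card_two_pow {a : α} (h : ∃ k : ℕ, (τ ^ (2 ^ k : ℕ)) a = a) :
    ∃ i : ℕ, (orbitF τ a).card = 2 ^ i := by
  obtain ⟨k, hk⟩ := h
  have hd := (orbit_card_dvd_iff τ).mp hk
  obtain ⟨i, _, hi⟩ := (Nat.dvd_prime_pow Nat.prime_two).mp hd
  exact ⟨i, hi⟩

theorem orbitF_sq_subset (x : α) : orbitF (τ ^ 2) x ⊆ orbitF τ x := by
  intro y hy
  obtain ⟨i, hi⟩ := (mem_orbitF_iff_pow _).mp hy
  rw [mem_orbitF_iff_pow]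
  refine ⟨2 * i, ?_⟩
  rw [pow_mul]
  exact hi

theorem orbitF_sq_cover (x : α) :
    orbitF τ x = orbitF (τ ^ 2) x ∪ (orbitF (τ ^ 2) x).image τ := by
  apply Finset.Subset.antisymm
  · intro y hy
    obtain ⟨i, hi⟩ := (mem_orbitF_iff_pow _).mp hy
    rcases Nat.even_or_odd i with he | ho
    · apply Finset.mem_union_left
      rw [mem_orbitF_iff_pow]
      obtain ⟨k, hk⟩ := he
      refine ⟨k, ?_⟩
      rw [← pow_mul]
      have : 2 * k = i := by omega
      rw [this]
      exact hi
    · apply Finset.mem_union_right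
      rw [Finset.mem_image]
      obtain ⟨k, hk⟩ := ho
      refine ⟨((τ ^ 2) ^ k) x, ?_, ?_⟩
      · rw [mem_orbitF_iff_pow]
        exact ⟨k, rfl⟩
      · rw [← hi, hk]
        have h21 : 2 * k + 1 = 1 + 2 * k := by omega
        rw [h21, pow_add, Equiv.Perm.mul_apply, pow_mul, pow_one]
  · intro y hy
    rcases Finset.mem_union.mp hy with h1 | h1
    · exact orbitF_sq_subset τ x h1
    · obtain ⟨w, hw, rfl⟩ := Finset.mem_image.mp h1
      exact orbitF_closed τ _ (orbitF_sq_subset τ x hw)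

theorem orbitF_sq_disjoint {x : α} (he : Even (orbitF τ x).card) :
    Disjoint (orbitF (τ ^ 2) x) ((orbitF (τ ^ 2) x).image τ) := by
  rw [Finset.disjoint_left]
  intro z hz1 hz2
  obtain ⟨i, hi⟩ := (mem_orbitF_iff_pow _).mp hz1
  obtain ⟨w, hw, hwz⟩ := Finset.mem_image.mp hz2
  obtain ⟨k, hk⟩ := (mem_orbitF_iff_pow _).mp hw
  have h1 : (τ ^ (2 * i)) x = (τ ^ (2 * k + 1)) x := by
    have e1 : (τ ^ (2 * i)) x = z := by rw [pow_mul]; exact hi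
    have e2 : (τ ^ (2 * k + 1)) x = z := by
      have h21 : 2 * k + 1 = 1 + 2 * k := by omega
      rw [h21, pow_add, Equiv.Perm.mul_apply, pow_mul, pow_one, hk, hwz]
    rw [e1, e2]
  have hm : ∀ d : ℕ, (orbitF τ x).card ∣ d → Odd d → False := by
    intro d hd hodd
    have hevd : Even d := by
      obtain ⟨t, ht⟩ := hd
      rw [ht]
      exact he.mul_right t
    exact (Nat.not_odd_iff_even.mpr hevd) hodd
  rcases le_or_gt (2 * k + 1) (2 * i) with hle | hlt
  · have := pow_apply_cancel τ hle h1
    have hd := (orbit_card_dvd_iff τ).mp this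
    exact hm _ hd ⟨i - k - 1, by omega⟩
  · have := pow_apply_cancel τ (le_of_lt hlt) h1.symm
    have hd := (orbit_card_dvd_iff τ).mp this
    exact hm _ hd ⟨k - i, by omega⟩

theorem orbitF_sq_image {x : α} (he : Even (orbitF τ x).card) :
    (orbitF (τ ^ 2) x).image τ = orbitF τ x \ orbitF (τ ^ 2) x := by
  have hcover := orbitF_sq_cover τ x
  have hdisj := orbitF_sq_disjoint τ he
  rw [hcover, Finset.union_sdiff_cancel_left hdisj]

theorem orbitF_sq_card {x : α} (he : Even (orbitF τ x).card) :
    (orbitF (τ ^ 2) x).card * 2 = (orbitF τ x).card := by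
  rw [orbitF_sq_cover τ x, Finset.card_union_of_disjoint (orbitF_sq_disjoint τ he),
    Finset.card_image_of_injective _ τ.injective]
  ring

end Orbits


section Alternation
set_option linter.unusedSectionVars false

variable {α : Type u} [Fintype α] [DecidableEq α] (τ : Equiv.Perm α)

theorem sdiff_image_eq {B L : Finset α} (hinv : ∀ x ∈ B, τ x ∈ B) (hLB : L ⊆ B)
    (himg : L.image τ = B \ L) : (B \ L).image τ = L := by
  have hB : B.image τ = B := image_eq_of_closed τ hinv
  rw [Finset.image_sdiff _ _ τ.injective, hB, himg, Finset.sdiff_sdiff_eq_self hLB]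

theorem alt_parity {B L : Finset α} (hinv : ∀ x ∈ B, τ x ∈ B) (hLB : L ⊆ B)
    (himg : L.image τ = B \ L) {x : α} (hx : x ∈ L) :
    ∀ j : ℕ, (τ ^ (2 * j)) x ∈ L ∧ (τ ^ (2 * j + 1)) x ∈ B \ L := by
  have himg' := sdiff_image_eq τ hinv hLB himg
  intro j
  induction j with
  | zero =>
    constructor
    · simpa using hx
    · have h1 : τ x ∈ L.image τ := Finset.mem_image_of_mem _ hx
      rw [himg] at h1
      simpa [pow_one] using h1
  | succ n ihn =>
    have e1 : (τ ^ (2 * (n + 1))) x = τ ((τ ^ (2 * n + 1)) x) := by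
      have h : 2 * (n + 1) = 1 + (2 * n + 1) := by omega
      rw [h, pow_add, Equiv.Perm.mul_apply, pow_one]
    have e2 : (τ ^ (2 * (n + 1) + 1)) x = τ ((τ ^ (2 * (n + 1))) x) := by
      have h : 2 * (n + 1) + 1 = 1 + 2 * (n + 1) := by omega
      rw [h, pow_add, Equiv.Perm.mul_apply, pow_one]
    have hA : (τ ^ (2 * (n + 1))) x ∈ L := by
      rw [e1, ← himg']
      exact Finset.mem_image_of_mem _ ihn.2
    refine ⟨hA, ?_⟩
    rw [e2, ← himg]
    exact Finset.mem_image_of_mem _ hA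

theorem alt_even_orbit {B L : Finset α} (hinv : ∀ x ∈ B, τ x ∈ B) (hLB : L ⊆ B)
    (himg : L.image τ = B \ L) {x : α} (hx : x ∈ L) :
    Even (orbitF τ x).card := by
  by_contra hodd
  rw [Nat.not_even_iff_odd] at hodd
  obtain ⟨j, hj⟩ := hodd
  have hfix : (τ ^ (2 * j + 1)) x = x := by
    rw [← hj]
    exact (orbit_card_dvd_iff τ).mpr dvd_rfl
  have h2 := (alt_parity τ hinv hLB himg hx j).2
  rw [hfix] at h2
  exact (Finset.mem_sdiff.mp h2).2 hx

theorem alt_sq_closed {B L : Finset α} (hinv : ∀ x ∈ B, τ x ∈ B) (hLB : L ⊆ B)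
    (himg : L.image τ = B \ L) : ∀ y ∈ L, (τ ^ 2) y ∈ L := by
  intro y hy
  have h := (alt_parity τ hinv hLB himg hy 1).1
  have e : 2 * 1 = 2 := by norm_num
  rwa [e] at h

theorem alt_orbit_sq_subset {B L : Finset α} (hinv : ∀ x ∈ B, τ x ∈ B) (hLB : L ⊆ B)
    (himg : L.image τ = B \ L) {x : α} (hx : x ∈ L) : orbitF (τ ^ 2) x ⊆ L :=
  orbitF_subset_of_closed (τ ^ 2) (alt_sq_closed τ hinv hLB himg) hx

theorem alt_inter_orbit {B L : Finset α} (hinv : ∀ x ∈ B, τ x ∈ B) (hLB : L ⊆ B)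
    (himg : L.image τ = B \ L) {a : α} (ha : a ∈ L) :
    L ∩ orbitF τ a = orbitF (τ ^ 2) a := by
  apply Finset.Subset.antisymm
  · intro x hx
    obtain ⟨hxL, hxc⟩ := Finset.mem_inter.mp hx
    obtain ⟨k, hk⟩ := (mem_orbitF_iff_pow τ).mp hxc
    rcases Nat.even_or_odd k with ⟨i, hik⟩ | ⟨i, hik⟩
    · rw [mem_orbitF_iff_pow]
      refine ⟨i, ?_⟩
      rw [← pow_mul]
      have h : 2 * i = k := by omega
      rw [h]
      exact hk
    · exfalso
      have h2 := (alt_parity τ hinv hLB himg ha i).2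
      have hk' : (τ ^ (2 * i + 1)) a = x := by
        rw [← hik]
        exact hk
      rw [hk'] at h2
      exact (Finset.mem_sdiff.mp h2).2 hxL
  · intro x hx
    exact Finset.mem_inter.mpr ⟨alt_orbit_sq_subset τ hinv hLB himg ha hx,
      orbitF_sq_subset τ a hx⟩

theorem alt_sq_inter_image {B L C : Finset α} (hinv : ∀ x ∈ B, τ x ∈ B) (hLB : L ⊆ B)
    (himg : L.image τ = B \ L) (hC : C.image τ = C) (hCB : C ⊆ B) :
    (L ∩ C).image τ = C \ (L ∩ C) := by
  apply Finset.Subset.antisymm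
  · intro z hz
    obtain ⟨y, hy, rfl⟩ := Finset.mem_image.mp hz
    obtain ⟨hyL, hyC⟩ := Finset.mem_inter.mp hy
    have h1 : τ y ∈ B \ L := by
      rw [← himg]
      exact Finset.mem_image_of_mem _ hyL
    have h2 : τ y ∈ C := by
      rw [← hC]
      exact Finset.mem_image_of_mem _ hyC
    rw [Finset.mem_sdiff]
    exact ⟨h2, fun hcon => (Finset.mem_sdiff.mp h1).2 (Finset.mem_inter.mp hcon).1⟩
  · intro z hz
    obtain ⟨hzC, hzn⟩ := Finset.mem_sdiff.mp hz
    have hzB : z ∈ B := hCB hzC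
    have hznL : z ∉ L := fun hL => hzn (Finset.mem_inter.mpr ⟨hL, hzC⟩)
    have h1 : z ∈ L.image τ := by
      rw [himg]
      exact Finset.mem_sdiff.mpr ⟨hzB, hznL⟩
    obtain ⟨y, hyL, rfl⟩ := Finset.mem_image.mp h1
    have h2 : y ∈ C := by
      have h3 : τ y ∈ C.image τ := by
        rw [hC]
        exact hzC
      obtain ⟨y', hy', he⟩ := Finset.mem_image.mp h3
      have h4 : y' = y := τ.injective he
      rwa [← h4]
    exact Finset.mem_image_of_mem _ (Finset.mem_inter.mpr ⟨hyL, h2⟩)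

theorem card_eq_two_mul_of_image_sdiff {C D : Finset α} (hD : D ⊆ C)
    (h : D.image τ = C \ D) : C.card = 2 * D.card := by
  have hC : C = D ∪ (C \ D) := (Finset.union_sdiff_of_subset hD).symm
  rw [hC, Finset.card_union_of_disjoint Finset.disjoint_sdiff, ← h,
    Finset.card_image_of_injective _ τ.injective]
  ring

end Alternation


section FixInfra
set_option linter.unusedSectionVars false

variable {α : Type u} [Fintype α] [DecidableEq α]

theorem PTree.leaves_card_pos (δ : PTree α) : 0 < Multiset.card δ.leaves := by
  induction δ using Quot.ind with | _ t =>
  exact t.leaves_card_pos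

noncomputable def FixF (τ : Equiv.Perm α) (B : Finset α) : Finset (PTree α) :=
  (fixedTrees_finite τ B).toFinset

theorem mem_FixF {τ : Equiv.Perm α} {B : Finset α} {δ : PTree α} :
    δ ∈ FixF τ B ↔ δ.leaves = B.val ∧ δ.relabel τ = δ := by
  rw [FixF, Set.Finite.mem_toFinset]
  rfl

noncomputable def Fcard (τ : Equiv.Perm α) (B : Finset α) : ℕ := (FixF τ B).card

theorem image_val_eq (π : Equiv.Perm α) (D : Finset α) :
    (D.image π).val = D.val.map π := by
  rw [Finset.image_val, Multiset.dedup_eq_self.mpr]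
  exact D.nodup.map π.injective

theorem val_add_sdiff {L B : Finset α} (h : L ⊆ B) : L.val + (B \ L).val = B.val := by
  rw [Finset.sdiff_val, add_tsub_cancel_of_le]
  exact Finset.val_le_iff.mpr h

theorem leavesFin_of_leaves_eq {u : PTree α} {L : Finset α} (h : u.leaves = L.val) :
    u.leavesFin = L := by
  rw [PTree.leavesFin, h, Finset.val_toFinset]

theorem Fcard_singleton (τ : Equiv.Perm α) {x : α} (h : τ x = x) : Fcard τ {x} = 1 := by
  have hset : FixF τ {x} = {@id (PTree α) (Quot.mk RTree.TEquiv (RTree.leaf x))} := by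
    apply Finset.ext
    intro δ
    rw [mem_FixF, Finset.mem_singleton]
    constructor
    · rintro ⟨h1, _⟩
      exact PTree.eq_leaf_of_leaves_singleton (by simpa using h1)
    · rintro rfl
      refine ⟨by simp [RTree.leaves]; rfl, ?_⟩
      show Quot.mk RTree.TEquiv (RTree.leaf (τ x)) = Quot.mk RTree.TEquiv (RTree.leaf x)
      rw [h]
  rw [Fcard, hset, Finset.card_singleton]

theorem Fcard_relabel_le (g π : Equiv.Perm α) (hcomm : ⇑g ∘ ⇑π = ⇑π ∘ ⇑g) (D : Finset α) :
    Fcard g D ≤ Fcard g (D.image π) := by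
  apply Finset.card_le_card_of_injOn (fun δ => δ.relabel π)
  · intro δ hδ
    simp only [Finset.mem_coe, mem_FixF] at *
    obtain ⟨h1, h2⟩ := hδ
    constructor
    · rw [PTree.leaves_relabel, h1, image_val_eq]
    · rw [PTree.relabel_comp, hcomm, ← PTree.relabel_comp, h2]
  · intro δ1 _ δ2 _ he
    have h3 := congrArg (PTree.relabel ⇑(π⁻¹)) he
    simp only [PTree.relabel_comp] at h3
    have h4 : ⇑(π⁻¹) ∘ ⇑π = id := by
      funext x
      simp
    rwa [h4, PTree.relabel_id, PTree.relabel_id] at h3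

theorem Fcard_image (g π : Equiv.Perm α) (hcomm : ⇑g ∘ ⇑π = ⇑π ∘ ⇑g) (D : Finset α) :
    Fcard g (D.image π) = Fcard g D := by
  apply le_antisymm
  · have hcomm' : ⇑g ∘ ⇑(π⁻¹) = ⇑(π⁻¹) ∘ ⇑g := by
      funext x
      simp only [Function.comp_apply]
      apply π.injective
      have h1 := congrFun hcomm (π⁻¹ x)
      simp only [Function.comp_apply, show π (π⁻¹ x) = x from π.apply_symm_apply x] at h1
      rw [← h1]
      simp
    have h := Fcard_relabel_le g π⁻¹ hcomm' (D.image π)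
    have he : (D.image ⇑π).image ⇑(π⁻¹) = D := by
      rw [Finset.image_image]
      have : ⇑(π⁻¹) ∘ ⇑π = id := by funext x; simp
      rw [this, Finset.image_id]
    rwa [he] at h
  · exact Fcard_relabel_le g π hcomm D

/-- Root decomposition of a fixed tree, oriented so `a` is in the first child. -/
theorem fix_decomp {τ : Equiv.Perm α} {B : Finset α} {a : α} (ha : a ∈ B)
    (hB : 2 ≤ B.card) {δ : PTree α} (hδ : δ ∈ FixF τ B) :
    ∃ u v : PTree α, δ = PTree.pnode u v ∧
      u.leaves = (PTree.sideOf a δ).val ∧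
      v.leaves = (B \ PTree.sideOf a δ).val ∧
      a ∈ PTree.sideOf a δ ∧ PTree.sideOf a δ ⊆ B ∧ PTree.sideOf a δ ≠ B ∧
      ((PTree.relabel τ u = u ∧ PTree.relabel τ v = v) ∨
        (PTree.relabel τ u = v ∧ PTree.relabel τ v = u)) := by
  rw [mem_FixF] at hδ
  obtain ⟨hleaves, hfixed⟩ := hδ
  obtain ⟨u0, v0, hδ0⟩ := PTree.exists_pnode (δ := δ)
    (by rw [hleaves]; simpa using hB)
  have hsum0 : u0.leaves + v0.leaves = B.val := by
    rw [← PTree.leaves_pnode, ← hδ0, hleaves]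
  have hnodup : (u0.leaves + v0.leaves).Nodup := by
    rw [hsum0]; exact B.nodup
  rw [Multiset.nodup_add] at hnodup
  obtain ⟨hnu, hnv, hdisj⟩ := hnodup
  have haB : a ∈ u0.leaves + v0.leaves := by rw [hsum0]; exact ha
  rw [Multiset.mem_add] at haB
  -- orient so that a is in the first child
  obtain ⟨u, v, hδ', hau, hnav, hnu', hnv', hsum⟩ :
      ∃ u v : PTree α, δ = PTree.pnode u v ∧ a ∈ u.leaves ∧ a ∉ v.leaves ∧
        u.leaves.Nodup ∧ v.leaves.Nodup ∧ u.leaves + v.leaves = B.val := by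
    rcases haB with hau | hav
    · exact ⟨u0, v0, hδ0, hau,
        fun hc => (Multiset.disjoint_left.mp hdisj) hau hc, hnu, hnv, hsum0⟩
    · refine ⟨v0, u0, by rw [hδ0, PTree.pnode_comm], hav,
        fun hc => (Multiset.disjoint_left.mp hdisj) hc hav, hnv, hnu, ?_⟩
      rw [add_comm]; exact hsum0
  -- identify the side
  have hside : PTree.sideOf a δ = u.leavesFin := by
    rw [hδ']
    exact PTree.sideOf_pnode_left hau hnav
  have huval : u.leavesFin.val = u.leaves := by
    rw [PTree.leavesFin, Multiset.toFinset_val, Multiset.dedup_eq_self.mpr hnu']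
  have hsub : PTree.sideOf a δ ⊆ B := by
    rw [hside, ← Finset.val_le_iff, huval]
    rw [← hsum]
    exact Multiset.le_iff_exists_add.mpr ⟨v.leaves, rfl⟩
  have hvval : v.leaves = (B \ PTree.sideOf a δ).val := by
    rw [Finset.sdiff_val, hside, huval, ← hsum, add_tsub_cancel_left]
  have hne : PTree.sideOf a δ ≠ B := by
    intro hcon
    have : v.leaves = 0 := by
      rw [hvval, hcon]
      simp
    have hpos := PTree.leaves_card_pos v
    rw [this] at hpos
    simp at hpos
  refine ⟨u, v, hδ', by rw [hside, huval], hvval, ?_, hsub, hne, ?_⟩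
  · rw [hside, PTree.leavesFin, Multiset.mem_toFinset]
    exact hau
  · have hfl : PTree.relabel τ δ = PTree.pnode (PTree.relabel τ u) (PTree.relabel τ v) := by
      rw [hδ', PTree.relabel_pnode]
    rw [hδ'] at hfixed
    rw [hδ'] at hfl
    have := hfl.symm.trans hfixed
    exact PTree.pnode_eq_pnode this

end FixInfra


section DEC
set_option linter.unusedSectionVars false

variable {α : Type u} [Fintype α] [DecidableEq α]

def PP (τ : Equiv.Perm α) (B : Finset α) (a : α) : Finset (Finset α) :=
  B.powerset.filter (fun L => a ∈ L ∧ L ≠ B ∧ L.image τ = L)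

def QQ (τ : Equiv.Perm α) (B : Finset α) (a : α) : Finset (Finset α) :=
  B.powerset.filter (fun L => a ∈ L ∧ L.image τ = B \ L)

theorem mem_PP {τ : Equiv.Perm α} {B : Finset α} {a : α} {L : Finset α} :
    L ∈ PP τ B a ↔ L ⊆ B ∧ a ∈ L ∧ L ≠ B ∧ L.image τ = L := by
  simp [PP, Finset.mem_filter, Finset.mem_powerset, and_assoc]

theorem mem_QQ {τ : Equiv.Perm α} {B : Finset α} {a : α} {L : Finset α} :
    L ∈ QQ τ B a ↔ L ⊆ B ∧ a ∈ L ∧ L.image τ = B \ L := by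
  simp [QQ, Finset.mem_filter, Finset.mem_powerset, and_assoc]

theorem fiber_data {τ : Equiv.Perm α} {B : Finset α} {a : α} (ha : a ∈ B)
    (hB : 2 ≤ B.card) {δ : PTree α} (hδ : δ ∈ FixF τ B) {L : Finset α}
    (hL : PTree.sideOf a δ = L) :
    ∃ u v, δ = PTree.pnode u v ∧ u.leaves = L.val ∧ v.leaves = (B \ L).val ∧
      a ∈ L ∧ L ⊆ B ∧ L ≠ B ∧
      ((PTree.relabel τ u = u ∧ PTree.relabel τ v = v ∧ L.image τ = L) ∨
       (PTree.relabel τ u = v ∧ PTree.relabel τ v = u ∧ L.image τ = B \ L)) := by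
  obtain ⟨u, v, h1, h2, h3, h4, h5, h6, h7⟩ := fix_decomp ha hB hδ
  rw [hL] at h2 h3 h4 h5 h6
  refine ⟨u, v, h1, h2, h3, h4, h5, h6, ?_⟩
  rcases h7 with ⟨hu, hv⟩ | ⟨hu, hv⟩
  · left
    refine ⟨hu, hv, ?_⟩
    rw [← Finset.val_inj, image_val_eq]
    have h8 := congrArg PTree.leaves hu
    rw [PTree.leaves_relabel, h2] at h8
    exact h8
  · right
    refine ⟨hu, hv, ?_⟩
    rw [← Finset.val_inj, image_val_eq]
    have := congrArg PTree.leaves hu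
    rw [PTree.leaves_relabel, h2, h3] at this
    exact this

theorem sideOf_mem_union {τ : Equiv.Perm α} {B : Finset α} {a : α} (ha : a ∈ B)
    (hB : 2 ≤ B.card) :
    ∀ δ ∈ FixF τ B, PTree.sideOf a δ ∈ PP τ B a ∪ QQ τ B a := by
  intro δ hδ
  obtain ⟨u, v, _, _, _, h4, h5, h6, hcase⟩ := fiber_data ha hB hδ rfl
  rcases hcase with ⟨_, _, himg⟩ | ⟨_, _, himg⟩
  · exact Finset.mem_union_left _ (mem_PP.mpr ⟨h5, h4, h6, himg⟩)
  · exact Finset.mem_union_right _ (mem_QQ.mpr ⟨h5, h4, himg⟩)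

theorem sdiff_ne_of_mem {B L : Finset α} {a : α} (haL : a ∈ L) : L ≠ B \ L := by
  intro hcon
  have h1 : a ∈ B \ L := by rw [← hcon]; exact haL
  exact (Finset.mem_sdiff.mp h1).2 haL

theorem fiberP {τ : Equiv.Perm α} {B : Finset α} {a : α} (ha : a ∈ B) (hB : 2 ≤ B.card)
    {L : Finset α} (hL : L ∈ PP τ B a) :
    ((FixF τ B).filter (fun δ => PTree.sideOf a δ = L)).card =
      Fcard τ L * Fcard τ (B \ L) := by
  obtain ⟨hLB, haL, hLneB, himgL⟩ := mem_PP.mp hL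
  have hLne : L ≠ B \ L := sdiff_ne_of_mem haL
  rw [Fcard, Fcard, ← Finset.card_product]
  apply Finset.card_nbij' (fun δ => (PTree.childAt L δ, PTree.childAt (B \ L) δ))
    (fun p => PTree.pnode p.1 p.2)
  · intro δ hδf
    rw [Finset.mem_coe, Finset.mem_filter] at hδf
    obtain ⟨hδ, hside⟩ := hδf
    obtain ⟨u, v, h1, h2, h3, _, _, _, hcase⟩ := fiber_data ha hB hδ hside
    have hufin : u.leavesFin = L := leavesFin_of_leaves_eq h2
    have hvfin : v.leavesFin = B \ L := leavesFin_of_leaves_eq h3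
    have hcu : PTree.childAt L δ = u := by
      rw [h1]
      exact PTree.childAt_pnode_left hufin (by rw [hvfin]; exact Ne.symm hLne)
    have hcv : PTree.childAt (B \ L) δ = v := by
      rw [h1]
      exact PTree.childAt_pnode_right hvfin (by rw [hufin]; exact hLne)
    rcases hcase with ⟨hfu, hfv, _⟩ | ⟨_, _, himg2⟩
    · simp only [Finset.mem_coe, Finset.mem_product]
      constructor
      · rw [hcu, mem_FixF]; exact ⟨h2, hfu⟩
      · rw [hcv, mem_FixF]; exact ⟨h3, hfv⟩
    · exfalso
      rw [himgL] at himg2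
      exact hLne himg2
  · intro p hp
    rw [Finset.mem_coe, Finset.mem_product] at hp
    obtain ⟨hp1, hp2⟩ := hp
    rw [mem_FixF] at hp1 hp2
    simp only [Finset.mem_coe, Finset.mem_filter]
    have hleaves : (PTree.pnode p.1 p.2).leaves = B.val := by
      rw [PTree.leaves_pnode, hp1.1, hp2.1, val_add_sdiff hLB]
    refine ⟨?_, ?_⟩
    · rw [mem_FixF]
      refine ⟨hleaves, ?_⟩
      rw [PTree.relabel_pnode, hp1.2, hp2.2]
    · have hau : a ∈ p.1.leaves := by
        rw [hp1.1]
        exact Finset.mem_val.mpr haL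
      have hav : a ∉ p.2.leaves := by
        rw [hp2.1]
        intro hc
        exact (Finset.mem_sdiff.mp (Finset.mem_val.mp hc)).2 haL
      rw [PTree.sideOf_pnode_left hau hav, leavesFin_of_leaves_eq hp1.1]
  · intro δ hδf
    rw [Finset.mem_coe, Finset.mem_filter] at hδf
    obtain ⟨hδ, hside⟩ := hδf
    obtain ⟨u, v, h1, h2, h3, _, _, _, _⟩ := fiber_data ha hB hδ hside
    have hufin : u.leavesFin = L := leavesFin_of_leaves_eq h2
    have hvfin : v.leavesFin = B \ L := leavesFin_of_leaves_eq h3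
    have hcu : PTree.childAt L δ = u := by
      rw [h1]
      exact PTree.childAt_pnode_left hufin (by rw [hvfin]; exact Ne.symm hLne)
    have hcv : PTree.childAt (B \ L) δ = v := by
      rw [h1]
      exact PTree.childAt_pnode_right hvfin (by rw [hufin]; exact hLne)
    show PTree.pnode (PTree.childAt L δ) (PTree.childAt (B \ L) δ) = δ
    rw [hcu, hcv]
    exact h1.symm
  · intro p hp
    rw [Finset.mem_coe, Finset.mem_product] at hp
    obtain ⟨hp1, hp2⟩ := hp
    rw [mem_FixF] at hp1 hp2
    have hufin : p.1.leavesFin = L := leavesFin_of_leaves_eq hp1.1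
    have hvfin : p.2.leavesFin = B \ L := leavesFin_of_leaves_eq hp2.1
    have e1 : PTree.childAt L (PTree.pnode p.1 p.2) = p.1 :=
      PTree.childAt_pnode_left hufin (by rw [hvfin]; exact Ne.symm hLne)
    have e2 : PTree.childAt (B \ L) (PTree.pnode p.1 p.2) = p.2 :=
      PTree.childAt_pnode_right hvfin (by rw [hufin]; exact hLne)
    show (PTree.childAt L (PTree.pnode p.1 p.2),
      PTree.childAt (B \ L) (PTree.pnode p.1 p.2)) = p
    rw [e1, e2]

theorem fiberQ {τ : Equiv.Perm α} {B : Finset α} {a : α} (ha : a ∈ B) (hB : 2 ≤ B.card)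
    {L : Finset α} (hL : L ∈ QQ τ B a) :
    ((FixF τ B).filter (fun δ => PTree.sideOf a δ = L)).card = Fcard (τ ^ 2) L := by
  obtain ⟨hLB, haL, himgL⟩ := mem_QQ.mp hL
  have hLne : L ≠ B \ L := sdiff_ne_of_mem haL
  have hcoe2 : ⇑(τ ^ 2) = ⇑τ ∘ ⇑τ := by rw [pow_two, Equiv.Perm.coe_mul]
  rw [Fcard]
  apply Finset.card_nbij' (fun δ => PTree.childAt L δ)
    (fun w => PTree.pnode w (w.relabel τ))
  · intro δ hδf
    rw [Finset.mem_coe, Finset.mem_filter] at hδf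
    obtain ⟨hδ, hside⟩ := hδf
    obtain ⟨u, v, h1, h2, h3, _, _, _, hcase⟩ := fiber_data ha hB hδ hside
    have hufin : u.leavesFin = L := leavesFin_of_leaves_eq h2
    have hvfin : v.leavesFin = B \ L := leavesFin_of_leaves_eq h3
    have hcu : PTree.childAt L δ = u := by
      rw [h1]
      exact PTree.childAt_pnode_left hufin (by rw [hvfin]; exact Ne.symm hLne)
    rcases hcase with ⟨_, _, himg2⟩ | ⟨hfu, hfv, _⟩
    · exfalso
      rw [himgL] at himg2
      exact hLne himg2.symm
    · simp only [Finset.mem_coe, hcu, mem_FixF]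
      refine ⟨h2, ?_⟩
      rw [hcoe2, ← PTree.relabel_comp, hfu, hfv]
  · intro w hw
    rw [Finset.mem_coe, mem_FixF] at hw
    obtain ⟨hw1, hw2⟩ := hw
    have hwrel : (w.relabel τ).leaves = (B \ L).val := by
      rw [PTree.leaves_relabel, hw1, ← image_val_eq, himgL]
    simp only [Finset.mem_coe, Finset.mem_filter]
    have hau : a ∈ w.leaves := by
      rw [hw1]
      exact Finset.mem_val.mpr haL
    have hav : a ∉ (w.relabel τ).leaves := by
      rw [hwrel]
      intro hc
      exact (Finset.mem_sdiff.mp (Finset.mem_val.mp hc)).2 haL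
    refine ⟨?_, ?_⟩
    · rw [mem_FixF]
      constructor
      · rw [PTree.leaves_pnode, hw1, hwrel, val_add_sdiff hLB]
      · rw [PTree.relabel_pnode]
        have hsq : PTree.relabel (⇑τ) (PTree.relabel (⇑τ) w) = w := by
          rw [PTree.relabel_comp, ← hcoe2]
          exact hw2
        rw [hsq, PTree.pnode_comm]
    · rw [PTree.sideOf_pnode_left hau hav, leavesFin_of_leaves_eq hw1]
  · intro δ hδf
    rw [Finset.mem_coe, Finset.mem_filter] at hδf
    obtain ⟨hδ, hside⟩ := hδf
    obtain ⟨u, v, h1, h2, h3, _, _, _, hcase⟩ := fiber_data ha hB hδ hside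
    have hufin : u.leavesFin = L := leavesFin_of_leaves_eq h2
    have hvfin : v.leavesFin = B \ L := leavesFin_of_leaves_eq h3
    have hcu : PTree.childAt L δ = u := by
      rw [h1]
      exact PTree.childAt_pnode_left hufin (by rw [hvfin]; exact Ne.symm hLne)
    rcases hcase with ⟨_, _, himg2⟩ | ⟨hfu, hfv, _⟩
    · exfalso
      rw [himgL] at himg2
      exact hLne himg2.symm
    · show PTree.pnode (PTree.childAt L δ) ((PTree.childAt L δ).relabel τ) = δ
      rw [hcu, hfu]
      exact h1.symm
  · intro w hw
    rw [Finset.mem_coe, mem_FixF] at hw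
    obtain ⟨hw1, _⟩ := hw
    have hwrel : (w.relabel τ).leaves = (B \ L).val := by
      rw [PTree.leaves_relabel, hw1, ← image_val_eq, himgL]
    exact PTree.childAt_pnode_left (leavesFin_of_leaves_eq hw1)
      (by rw [leavesFin_of_leaves_eq hwrel]; exact Ne.symm hLne)

theorem DEC (τ : Equiv.Perm α) (B : Finset α) (a : α) (ha : a ∈ B) (hB : 2 ≤ B.card) :
    Fcard τ B = (∑ L ∈ PP τ B a, Fcard τ L * Fcard τ (B \ L)) +
      (∑ L ∈ QQ τ B a, Fcard (τ ^ 2) L) := by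
  have hdisj : Disjoint (PP τ B a) (QQ τ B a) := by
    rw [Finset.disjoint_left]
    intro L hP hQ
    obtain ⟨_, haL, _, h1⟩ := mem_PP.mp hP
    obtain ⟨_, _, h2⟩ := mem_QQ.mp hQ
    rw [h1] at h2
    exact sdiff_ne_of_mem haL h2
  rw [Fcard, Finset.card_eq_sum_card_fiberwise (sideOf_mem_union ha hB),
    Finset.sum_union hdisj]
  congr 1
  · exact Finset.sum_congr rfl (fun L hL => fiberP ha hB hL)
  · exact Finset.sum_congr rfl (fun L hL => fiberQ ha hB hL)

end DEC


section CYC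
set_option linter.unusedSectionVars false

variable {α : Type u} [Fintype α] [DecidableEq α]

theorem CYC_aux : ∀ (n : ℕ) (τ : Equiv.Perm α) (a : α), (orbitF τ a).card = n →
    (∃ k : ℕ, (τ ^ (2 ^ k : ℕ)) a = a) → Fcard τ (orbitF τ a) = 1 := by
  intro n
  induction n using Nat.strong_induction_on with
  | _ n ih =>
    intro τ a hcard h2
    by_cases hfix1 : τ a = a
    · rw [orbitF_eq_singleton τ hfix1]
      exact Fcard_singleton τ hfix1
    · have ha : a ∈ orbitF τ a := self_mem_orbitF τ
      have hta : τ a ∈ orbitF τ a := orbitF_closed τ a ha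
      have hm2 : 2 ≤ (orbitF τ a).card :=
        Finset.one_lt_card.mpr ⟨a, ha, τ a, hta, fun hcon => hfix1 hcon.symm⟩
      have heven : Even (orbitF τ a).card := by
        obtain ⟨i, hi⟩ := orbit_card_two_pow τ h2
        rcases i with _ | j
        · rw [hi] at hm2
          norm_num at hm2
        · rw [hi]
          exact ⟨2 ^ j, by rw [pow_succ]; ring⟩
      have hdec := DEC τ (orbitF τ a) a ha hm2
      have hPP : PP τ (orbitF τ a) a = ∅ := by
        rw [Finset.eq_empty_iff_forall_notMem]
        intro L hLP
        obtain ⟨hLB, haL, hLne, himg⟩ := mem_PP.mp hLP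
        have hclosed : ∀ x ∈ L, τ x ∈ L := fun x hx =>
          himg ▸ Finset.mem_image_of_mem τ hx
        exact hLne (Finset.Subset.antisymm hLB
          (orbitF_subset_of_closed τ hclosed haL))
      have hQQ : QQ τ (orbitF τ a) a = {orbitF (τ ^ 2) a} := by
        apply Finset.ext
        intro L
        rw [mem_QQ, Finset.mem_singleton]
        constructor
        · rintro ⟨hLB, haL, himg⟩
          have h9 := alt_inter_orbit τ (orbitF_closed τ) hLB himg haL
          rwa [Finset.inter_eq_left.mpr hLB] at h9
        · rintro rfl
          exact ⟨orbitF_sq_subset τ a, self_mem_orbitF _, orbitF_sq_image τ heven⟩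
      rw [hdec, hPP, hQQ, Finset.sum_empty, Finset.sum_singleton, zero_add]
      have hlt : (orbitF (τ ^ 2) a).card < n := by
        have hh := orbitF_sq_card τ (x := a) heven
        omega
      apply ih _ hlt (τ ^ 2) a rfl
      obtain ⟨k, hk⟩ := h2
      refine ⟨k, ?_⟩
      have he : ((τ ^ 2) ^ (2 ^ k : ℕ)) = (τ ^ (2 ^ k : ℕ)) ^ 2 := by
        rw [← pow_mul, ← pow_mul, mul_comm]
      rw [he]
      exact pow_fix hk 2

theorem Fcard_orbit_eq_one (τ : Equiv.Perm α) (a : α)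
    (h2 : ∃ k : ℕ, (τ ^ (2 ^ k : ℕ)) a = a) : Fcard τ (orbitF τ a) = 1 :=
  CYC_aux _ τ a rfl h2

end CYC


section CNT
set_option linter.unusedSectionVars false
set_option maxHeartbeats 1000000

variable {α : Type u} [Fintype α] [DecidableEq α]

theorem sdiff_sdiff_helper {B c L : Finset α} (hc : c ⊆ L) (hLB : L ⊆ B) :
    (B \ c) \ (L \ c) = B \ L := by
  ext x
  simp only [Finset.mem_sdiff]
  constructor
  · rintro ⟨⟨hxB, hxc⟩, h2⟩
    exact ⟨hxB, fun hxL => h2 ⟨hxL, hxc⟩⟩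
  · rintro ⟨hxB, hxL⟩
    exact ⟨⟨hxB, fun hxc => hxL (hc hxc)⟩, fun h => hxL h.1⟩

theorem sdiff_sdiff_helper2 {B c L : Finset α} :
    (B \ L) \ c = (B \ c) \ (L \ c) := by
  ext x
  simp only [Finset.mem_sdiff]
  constructor
  · rintro ⟨⟨hxB, hxL⟩, hxc⟩
    exact ⟨⟨hxB, hxc⟩, fun h => hxL h.1⟩
  · rintro ⟨⟨hxB, hxc⟩, h2⟩
    exact ⟨⟨hxB, fun hxL => h2 ⟨hxL, hxc⟩⟩, hxc⟩

theorem CNT_aux : ∀ (n : ℕ) (τ : Equiv.Perm α) (B : Finset α) (a : α), B.card = n →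
    a ∈ B →
    (∀ x ∈ B, τ x ∈ B) →
    (∀ x ∈ B, ∃ k : ℕ, (τ ^ (2 ^ k : ℕ)) x = x) →
    (∀ x ∈ B, (orbitF τ x).card ≤ (orbitF τ a).card) →
    orbitF τ a ≠ B →
    Fcard τ B = (2 * (B \ orbitF τ a).card - 1) * Fcard τ (B \ orbitF τ a) := by
  intro n
  induction n using Nat.strong_induction_on with
  | _ n ih =>
    intro τ B a hcard ha hinv h2 hmax hne
    set c : Finset α := orbitF τ a with hc_def
    set B' : Finset α := B \ c with hB'_def
    set n' : ℕ := B'.card with hn'_def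
    have hcB : c ⊆ B := orbitF_subset_of_closed τ hinv ha
    have hB'B : B' ⊆ B := Finset.sdiff_subset
    have hB'ne : B'.Nonempty := by
      rw [hB'_def, Finset.sdiff_nonempty]
      intro hcon
      exact hne (Finset.Subset.antisymm hcB hcon)
    have hn'1 : 1 ≤ n' := Finset.card_pos.mpr hB'ne
    have hac : a ∈ c := self_mem_orbitF τ
    have hB2 : 2 ≤ B.card := by
      obtain ⟨x, hx⟩ := hB'ne
      have hxB : x ∈ B := hB'B hx
      have hxc : x ∉ c := (Finset.mem_sdiff.mp hx).2
      exact Finset.one_lt_card.mpr ⟨a, ha, x, hxB, fun hcon => hxc (hcon ▸ hac)⟩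
    have hcinv : c.image τ = c := orbitF_image τ
    have hBimg : B.image τ = B := image_eq_of_closed τ hinv
    have hB'inv : B'.image τ = B' := by
      rw [hB'_def, Finset.image_sdiff _ _ τ.injective, hBimg, hcinv]
    have hdisjB'c : Disjoint B' c := Finset.sdiff_disjoint
    have hB'c : ∀ x ∈ B', x ∉ c := fun x hx => (Finset.mem_sdiff.mp hx).2
    have hCYC : Fcard τ c = 1 := Fcard_orbit_eq_one τ a (h2 a ha)
    have hB'closed : ∀ x ∈ B', τ x ∈ B' := by
      intro x hx
      rw [← hB'inv]
      exact Finset.mem_image_of_mem τ hx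
    -- the decomposition at (τ, B, a)
    have hdec := DEC τ B a ha hB2
    -- ==================== P side ====================
    set P₀ : Finset (Finset α) :=
      B'.powerset.filter (fun D => D ≠ B' ∧ D.image τ = D) with hP₀_def
    have hmemP₀ : ∀ {D : Finset α}, D ∈ P₀ ↔ D ⊆ B' ∧ D ≠ B' ∧ D.image τ = D := by
      intro D
      simp [hP₀_def, Finset.mem_filter, Finset.mem_powerset, and_assoc]
    have hPPmem : ∀ {L : Finset α}, L ∈ PP τ B a → c ⊆ L := by
      intro L hL
      obtain ⟨hLB, haL, hLne, himg⟩ := mem_PP.mp hL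
      exact orbitF_subset_of_closed τ
        (fun x hx => himg ▸ Finset.mem_image_of_mem τ hx) haL
    have step1 : (∑ L ∈ PP τ B a, Fcard τ L * Fcard τ (B \ L)) =
        ∑ D ∈ P₀, Fcard τ (c ∪ D) * Fcard τ (B' \ D) := by
      apply Finset.sum_nbij' (i := fun L => L \ c) (j := fun D => c ∪ D)
      · intro L hL
        obtain ⟨hLB, haL, hLne, himg⟩ := mem_PP.mp hL
        have hcL := hPPmem hL
        rw [hmemP₀]
        refine ⟨Finset.sdiff_subset_sdiff hLB (Finset.Subset.refl c), ?_, ?_⟩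
        · intro hcon
          apply hLne
          have h3 : c ∪ (L \ c) = L := Finset.union_sdiff_of_subset hcL
          rw [hcon, hB'_def] at h3
          rw [← h3, Finset.union_sdiff_of_subset hcB]
        · rw [Finset.image_sdiff _ _ τ.injective, himg, hcinv]
      · intro D hD
        obtain ⟨hDB', hDne, hDimg⟩ := hmemP₀.mp hD
        rw [mem_PP]
        refine ⟨Finset.union_subset hcB (hDB'.trans hB'B), Finset.mem_union_left _ hac,
          ?_, ?_⟩
        · intro hcon
          apply hDne
          have h3 : (c ∪ D) \ c = D := by
            rw [Finset.union_sdiff_cancel_left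
              (Finset.disjoint_of_subset_right hDB' hdisjB'c.symm)]
          rw [hcon] at h3
          rw [← h3, hB'_def]
        · rw [Finset.image_union, hcinv, hDimg]
      · intro L hL
        exact Finset.union_sdiff_of_subset (hPPmem hL)
      · intro D hD
        obtain ⟨hDB', _, _⟩ := hmemP₀.mp hD
        exact Finset.union_sdiff_cancel_left
          (Finset.disjoint_of_subset_right hDB' hdisjB'c.symm)
      · intro L hL
        obtain ⟨hLB, _, _, _⟩ := mem_PP.mp hL
        have hcL := hPPmem hL
        rw [Finset.union_sdiff_of_subset hcL]
        congr 2
        rw [hB'_def, sdiff_sdiff_helper hcL hLB]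
    have hemptyP₀ : ∅ ∈ P₀ := by
      rw [hmemP₀]
      exact ⟨Finset.empty_subset _, fun hcon => hB'ne.ne_empty hcon.symm, by simp⟩
    have step2 : (∑ D ∈ P₀, Fcard τ (c ∪ D) * Fcard τ (B' \ D)) =
        Fcard τ B' + ∑ D ∈ P₀.erase ∅, Fcard τ (c ∪ D) * Fcard τ (B' \ D) := by
      rw [← Finset.add_sum_erase _ _ hemptyP₀]
      congr 1
      rw [Finset.union_empty, Finset.sdiff_empty, hCYC, one_mul]
    -- IH on the P side
    have step3 : ∀ D ∈ P₀.erase ∅,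
        Fcard τ (c ∪ D) = (2 * D.card - 1) * Fcard τ D := by
      intro D hD
      obtain ⟨hD0, hDP⟩ := Finset.mem_erase.mp hD
      obtain ⟨hDB', hDneB', hDimg⟩ := hmemP₀.mp hDP
      have hDc : Disjoint D c := Finset.disjoint_of_subset_left hDB' hdisjB'c
      have hKc : (c ∪ D) \ c = D := Finset.union_sdiff_cancel_left hDc.symm
      have hKB : c ∪ D ⊆ B := Finset.union_subset hcB (hDB'.trans hB'B)
      have hKlt : (c ∪ D).card < n := by
        rw [← hcard]
        apply Finset.card_lt_card
        rw [Finset.ssubset_iff_of_subset hKB]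
        obtain ⟨x, hx⟩ := Finset.sdiff_nonempty.mpr
          (fun hcon : B' ⊆ D => hDneB' (Finset.Subset.antisymm hDB' hcon))
        obtain ⟨hxB', hxD⟩ := Finset.mem_sdiff.mp hx
        exact ⟨x, hB'B hxB', fun hcon => (by
          rcases Finset.mem_union.mp hcon with h | h
          · exact hB'c x hxB' h
          · exact hxD h)⟩
      have hinvK : ∀ x ∈ c ∪ D, τ x ∈ c ∪ D := by
        intro x hx
        rcases Finset.mem_union.mp hx with h | h
        · exact Finset.mem_union_left _ (orbitF_closed τ x h)
        · exact Finset.mem_union_right _ (hDimg ▸ Finset.mem_image_of_mem τ h)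
      have hneK : orbitF τ a ≠ c ∪ D := by
        intro hcon
        obtain ⟨x, hxD⟩ := Finset.nonempty_iff_ne_empty.mpr hD0
        have hxK : x ∈ c ∪ D := Finset.mem_union_right _ hxD
        rw [← hcon] at hxK
        exact hB'c x (hDB' hxD) hxK
      have := ih _ hKlt τ (c ∪ D) a rfl (Finset.mem_union_left _ hac) hinvK
        (fun x hx => h2 x (hKB hx)) (fun x hx => hmax x (hKB hx)) hneK
      rw [← hc_def, hKc] at this
      exact this
    -- ==================== Q side ====================
    set c₂ : Finset α := orbitF (τ ^ 2) a with hc₂_def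
    have hc₂c : c₂ ⊆ c := orbitF_sq_subset τ a
    have hac₂ : a ∈ c₂ := self_mem_orbitF _
    set Q' : Finset (Finset α) :=
      B'.powerset.filter (fun D => D.image τ = B' \ D) with hQ'_def
    have hmemQ' : ∀ {D : Finset α}, D ∈ Q' ↔ D ⊆ B' ∧ D.image τ = B' \ D := by
      intro D
      simp [hQ'_def, Finset.mem_filter, Finset.mem_powerset]
    -- from any alternating structure, the orbit of a is even
    have hQev : ∀ {L : Finset α}, L ∈ QQ τ B a → Even c.card := by
      intro L hL
      obtain ⟨hLB, haL, himg⟩ := mem_QQ.mp hL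
      exact alt_even_orbit τ hinv hLB himg haL
    have hQ'ev : ∀ {D : Finset α}, D ∈ Q' → Even c.card := by
      intro D hD
      obtain ⟨hDB', hDimg⟩ := hmemQ'.mp hD
      have hD0 : D.Nonempty := by
        rcases Finset.eq_empty_or_nonempty D with h | h
        · exfalso
          rw [h] at hDimg
          simp only [Finset.image_empty, Finset.sdiff_empty] at hDimg
          exact hB'ne.ne_empty hDimg.symm
        · exact h
      obtain ⟨x, hxD⟩ := hD0
      have hτx : τ x ∈ B' \ D := by
        rw [← hDimg]
        exact Finset.mem_image_of_mem τ hxD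
      have hτxx : τ x ≠ x := by
        intro hcon
        apply (Finset.mem_sdiff.mp hτx).2
        rw [hcon]
        exact hxD
      have hx2 : 2 ≤ (orbitF τ x).card := by
        have h1 : x ∈ orbitF τ x := self_mem_orbitF τ
        have h2' : τ x ∈ orbitF τ x := orbitF_closed τ x h1
        exact Finset.one_lt_card.mpr ⟨x, h1, τ x, h2', fun hcon => hτxx hcon.symm⟩
      have hxm : 2 ≤ c.card := le_trans hx2 (hmax x (hB'B (hDB' hxD)))
      obtain ⟨i, hi⟩ := orbit_card_two_pow τ (h2 a ha)
      rcases i with _ | j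
      · rw [← hc_def] at hi
        rw [hi] at hxm
        norm_num at hxm
      · rw [← hc_def] at hi
        rw [hi]
        exact ⟨2 ^ j, by rw [pow_succ]; ring⟩
    -- IH on the Q side
    have step4 : ∀ L ∈ QQ τ B a,
        Fcard (τ ^ 2) L = (n' - 1) * Fcard (τ ^ 2) (L \ c) := by
      intro L hL
      obtain ⟨hLB, haL, himg⟩ := mem_QQ.mp hL
      have hLc2 : L ∩ c = c₂ := alt_inter_orbit τ hinv hLB himg haL
      have hLsd : L \ c₂ = L \ c := by
        rw [← hLc2, Finset.sdiff_inter_self_left]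
      have hLB'img : (L ∩ B').image τ = B' \ (L ∩ B') :=
        alt_sq_inter_image τ hinv hLB himg hB'inv hB'B
      have hLB'card : B'.card = 2 * (L ∩ B').card :=
        card_eq_two_mul_of_image_sdiff τ Finset.inter_subset_right hLB'img
      have hLcB' : L \ c = L ∩ B' := by
        ext x
        simp only [Finset.mem_sdiff, Finset.mem_inter, hB'_def]
        constructor
        · rintro ⟨hxL, hxc⟩
          exact ⟨hxL, hLB hxL, hxc⟩
        · rintro ⟨hxL, _, hxc⟩
          exact ⟨hxL, hxc⟩
      have hLlt : L.card < n := by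
        rw [← hcard]
        apply Finset.card_lt_card
        rw [Finset.ssubset_iff_of_subset hLB]
        have hτa : τ a ∈ B \ L := himg ▸ Finset.mem_image_of_mem τ haL
        exact ⟨τ a, (Finset.mem_sdiff.mp hτa).1, (Finset.mem_sdiff.mp hτa).2⟩
      have heva : Even (orbitF τ a).card := alt_even_orbit τ hinv hLB himg haL
      have hneL : orbitF (τ ^ 2) a ≠ L := by
        intro hcon
        apply hne
        have himgc2 : Finset.image (⇑τ) c₂ = c \ c₂ := orbitF_sq_image τ heva
        have hBL : B = L ∪ (B \ L) := (Finset.union_sdiff_of_subset hLB).symm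
        have hLc₂ : L = c₂ := hcon.symm
        rw [hBL, ← himg, hLc₂, himgc2, Finset.union_sdiff_of_subset hc₂c]
      have h2L : ∀ x ∈ L, ∃ k : ℕ, ((τ ^ 2) ^ (2 ^ k : ℕ)) x = x := by
        intro x hx
        obtain ⟨k, hk⟩ := h2 x (hLB hx)
        refine ⟨k, ?_⟩
        have he : ((τ ^ 2) ^ (2 ^ k : ℕ)) = (τ ^ (2 ^ k : ℕ)) ^ 2 := by
          rw [← pow_mul, ← pow_mul, mul_comm]
        rw [he]
        exact pow_fix hk 2
      have hmaxL : ∀ x ∈ L, (orbitF (τ ^ 2) x).card ≤ (orbitF (τ ^ 2) a).card := by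
        intro x hx
        have hevx : Even (orbitF τ x).card := alt_even_orbit τ hinv hLB himg hx
        have hx2 := orbitF_sq_card τ hevx
        have ha2 := orbitF_sq_card τ heva
        rw [← hc_def] at ha2
        have hmx := hmax x (hLB hx)
        omega
      have := ih _ hLlt (τ ^ 2) L a rfl haL
        (alt_sq_closed τ hinv hLB himg) h2L hmaxL hneL
      rw [← hc₂_def, hLsd, hLcB'] at this
      rw [this]
      congr 1
      · omega
      · rw [hLcB']
    have step5 : (∑ L ∈ QQ τ B a, Fcard (τ ^ 2) (L \ c)) =
        ∑ D ∈ Q', Fcard (τ ^ 2) D := by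
      apply Finset.sum_nbij' (i := fun L => L \ c) (j := fun D => D ∪ c₂)
      · intro L hL
        obtain ⟨hLB, haL, himg⟩ := mem_QQ.mp hL
        rw [hmemQ']
        refine ⟨Finset.sdiff_subset_sdiff hLB (Finset.Subset.refl c), ?_⟩
        rw [Finset.image_sdiff _ _ τ.injective, himg, hcinv, hB'_def,
          sdiff_sdiff_helper2]
      · intro D hD
        obtain ⟨hDB', hDimg⟩ := hmemQ'.mp hD
        have hev := hQ'ev hD
        have himgc2 : c₂.image τ = c \ c₂ := orbitF_sq_image τ hev
        rw [mem_QQ]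
        refine ⟨Finset.union_subset (hDB'.trans hB'B) (hc₂c.trans hcB),
          Finset.mem_union_right _ hac₂, ?_⟩
        rw [Finset.image_union, hDimg, himgc2]
        ext x
        simp only [Finset.mem_union, Finset.mem_sdiff]
        have e1 : x ∈ c → x ∈ B := fun h => hcB h
        have e2 : x ∈ B' → x ∈ B := fun h => hB'B h
        have e3 : x ∈ B' → x ∉ c := hB'c x
        have e4 : x ∈ c₂ → x ∈ c := fun h => hc₂c h
        have e5 : x ∈ D → x ∈ B' := fun h => hDB' h
        have e6 : x ∈ B → x ∉ c → x ∈ B' := fun h1 h2 => Finset.mem_sdiff.mpr ⟨h1, h2⟩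
        constructor
        · rintro (⟨h1, h2⟩ | ⟨h1, h2⟩)
          · exact ⟨e2 h1, fun hcon => (by
              rcases hcon with h | h
              · exact h2 h
              · exact e3 h1 (e4 h))⟩
          · exact ⟨e1 h1, fun hcon => (by
              rcases hcon with h | h
              · exact e3 (e5 h) h1
              · exact h2 h)⟩
        · rintro ⟨h1, h2⟩
          push_neg at h2
          by_cases hxc : x ∈ c
          · exact Or.inr ⟨hxc, h2.2⟩
          · exact Or.inl ⟨e6 h1 hxc, h2.1⟩
      · intro L hL
        obtain ⟨hLB, haL, himg⟩ := mem_QQ.mp hL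
        have hLc2 : L ∩ c = c₂ := alt_inter_orbit τ hinv hLB himg haL
        rw [← hLc2]
        exact Finset.sdiff_union_inter L c
      · intro D hD
        obtain ⟨hDB', _⟩ := hmemQ'.mp hD
        rw [Finset.union_sdiff_distrib]
        have h1 : D \ c = D := Finset.sdiff_eq_self_of_disjoint
          (Finset.disjoint_of_subset_left hDB' hdisjB'c)
        have h2' : c₂ \ c = ∅ := Finset.sdiff_eq_empty_iff_subset.mpr hc₂c
        rw [h1, h2', Finset.union_empty]
      · intro L hL
        rfl
    -- ==================== assembly ====================
    rw [hdec, step1, step2, Finset.sum_congr rfl step4, ← Finset.mul_sum, step5]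
    have hsum3 : ∑ D ∈ P₀.erase ∅, Fcard τ (c ∪ D) * Fcard τ (B' \ D) =
        ∑ D ∈ P₀.erase ∅, (2 * D.card - 1) * (Fcard τ D * Fcard τ (B' \ D)) := by
      apply Finset.sum_congr rfl
      intro D hD
      rw [step3 D hD, mul_assoc]
    rw [hsum3]
    -- two cases on n'
    rcases eq_or_lt_of_le hn'1 with hn'eq | hn'2
    · -- n' = 1
      have hP₀e : P₀.erase ∅ = ∅ := by
        rw [Finset.eq_empty_iff_forall_notMem]
        intro D hD
        obtain ⟨hD0, hDP⟩ := Finset.mem_erase.mp hD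
        obtain ⟨hDB', hDneB', _⟩ := hmemP₀.mp hDP
        have h1 : D.card ≤ n' := Finset.card_le_card hDB'
        have h2' : D.card < n' := Finset.card_lt_card
          (Finset.ssubset_iff_of_subset hDB' |>.mpr (by
            obtain ⟨x, hx⟩ := Finset.sdiff_nonempty.mpr
              (fun hcon : B' ⊆ D => hDneB' (Finset.Subset.antisymm hDB' hcon))
            exact ⟨x, (Finset.mem_sdiff.mp hx).1, (Finset.mem_sdiff.mp hx).2⟩))
        have h3 : 1 ≤ D.card := Finset.card_pos.mpr (Finset.nonempty_iff_ne_empty.mpr hD0)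
        omega
      have hQ'e : Q' = ∅ := by
        rw [Finset.eq_empty_iff_forall_notMem]
        intro D hD
        obtain ⟨hDB', hDimg⟩ := hmemQ'.mp hD
        have := card_eq_two_mul_of_image_sdiff τ hDB' hDimg
        omega
      rw [hP₀e, hQ'e, Finset.sum_empty, Finset.sum_empty, mul_zero, ← hn'eq]
      simp
    · -- n' ≥ 2
      obtain ⟨a', ha'⟩ := hB'ne
      have hdec' := DEC τ B' a' ha' (by omega)
      -- P side pairing
      have hS1 : (P₀.erase ∅).filter (fun D => a' ∈ D) = PP τ B' a' := by
        ext D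
        rw [Finset.mem_filter, Finset.mem_erase, hmemP₀, mem_PP]
        constructor
        · rintro ⟨⟨hD0, hDB', hDne, hDimg⟩, ha'D⟩
          exact ⟨hDB', ha'D, hDne, hDimg⟩
        · rintro ⟨hDB', ha'D, hDne, hDimg⟩
          exact ⟨⟨fun hcon => (by rw [hcon] at ha'D; simp at ha'D), hDB', hDne, hDimg⟩, ha'D⟩
      have hcompl : ∀ {D : Finset α}, D ⊆ B' → B' \ (B' \ D) = D :=
        fun hD => Finset.sdiff_sdiff_eq_self hD
      have hS2 : (∑ D ∈ (P₀.erase ∅).filter (fun D => ¬ a' ∈ D),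
            (2 * D.card - 1) * (Fcard τ D * Fcard τ (B' \ D))) =
          ∑ D ∈ (P₀.erase ∅).filter (fun D => a' ∈ D),
            (2 * (B' \ D).card - 1) * (Fcard τ (B' \ D) * Fcard τ D) := by
        apply Finset.sum_nbij' (i := fun D => B' \ D) (j := fun D => B' \ D)
        · intro D hD
          rw [Finset.mem_filter, Finset.mem_erase] at hD ⊢
          obtain ⟨⟨hD0, hDP⟩, ha'D⟩ := hD
          obtain ⟨hDB', hDneB', hDimg⟩ := hmemP₀.mp hDP
          refine ⟨⟨?_, ?_⟩, ?_⟩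
          · intro hcon
            rw [Finset.sdiff_eq_empty_iff_subset] at hcon
            exact hDneB' (Finset.Subset.antisymm hDB' hcon)
          · rw [hmemP₀]
            refine ⟨Finset.sdiff_subset, ?_, ?_⟩
            · intro hcon
              obtain ⟨x, hxD⟩ := Finset.nonempty_iff_ne_empty.mpr hD0
              have hx1 : x ∉ B' \ D := fun h => (Finset.mem_sdiff.mp h).2 hxD
              rw [hcon] at hx1
              exact hx1 (hDB' hxD)
            · rw [Finset.image_sdiff _ _ τ.injective, hB'inv, hDimg]
          · rw [Finset.mem_sdiff]
            exact ⟨ha', ha'D⟩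
        · intro D hD
          rw [Finset.mem_filter, Finset.mem_erase] at hD ⊢
          obtain ⟨⟨hD0, hDP⟩, ha'D⟩ := hD
          obtain ⟨hDB', hDneB', hDimg⟩ := hmemP₀.mp hDP
          refine ⟨⟨?_, ?_⟩, ?_⟩
          · intro hcon
            rw [Finset.sdiff_eq_empty_iff_subset] at hcon
            exact hDneB' (Finset.Subset.antisymm hDB' hcon)
          · rw [hmemP₀]
            refine ⟨Finset.sdiff_subset, ?_, ?_⟩
            · intro hcon
              have h5 : a' ∈ B' \ D := by rw [hcon]; exact ha'
              exact (Finset.mem_sdiff.mp h5).2 ha'D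
            · rw [Finset.image_sdiff _ _ τ.injective, hB'inv, hDimg]
          · intro hcon
            exact (Finset.mem_sdiff.mp hcon).2 ha'D
        · intro D hD
          rw [Finset.mem_filter, Finset.mem_erase] at hD
          exact hcompl (hmemP₀.mp hD.1.2).1
        · intro D hD
          rw [Finset.mem_filter, Finset.mem_erase] at hD
          exact hcompl (hmemP₀.mp hD.1.2).1
        · intro D hD
          rw [Finset.mem_filter, Finset.mem_erase] at hD
          rw [hcompl (hmemP₀.mp hD.1.2).1]
      have hsplit := Finset.sum_filter_add_sum_filter_not (P₀.erase ∅) (fun D => a' ∈ D)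
        (fun D => (2 * D.card - 1) * (Fcard τ D * Fcard τ (B' \ D)))
      rw [← hsplit, hS2, hS1, ← Finset.sum_add_distrib]
      have hcomb : ∀ D ∈ PP τ B' a',
          ((2 * D.card - 1) * (Fcard τ D * Fcard τ (B' \ D)) +
            (2 * (B' \ D).card - 1) * (Fcard τ (B' \ D) * Fcard τ D)) =
          (2 * n' - 2) * (Fcard τ D * Fcard τ (B' \ D)) := by
        intro D hD
        obtain ⟨hDB', ha'D, hDne, _⟩ := mem_PP.mp hD
        have hd1 : 1 ≤ D.card := Finset.card_pos.mpr ⟨a', ha'D⟩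
        have hdlt : D.card < n' := Finset.card_lt_card
          ⟨hDB', fun hcon => hDne (Finset.Subset.antisymm hDB' hcon)⟩
        have hsd : (B' \ D).card = n' - D.card := by
          rw [Finset.card_sdiff_of_subset hDB']
        rw [mul_comm (Fcard τ (B' \ D)), hsd, ← add_mul]
        congr 1
        omega
      rw [Finset.sum_congr rfl hcomb]
      -- Q side pairing
      have hT1 : Q'.filter (fun D => a' ∈ D) = QQ τ B' a' := by
        ext D
        rw [Finset.mem_filter, hmemQ', mem_QQ]
        tauto
      have hT2 : (∑ D ∈ Q'.filter (fun D => ¬ a' ∈ D), Fcard (τ ^ 2) D) =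
          ∑ D ∈ Q'.filter (fun D => a' ∈ D), Fcard (τ ^ 2) (B' \ D) := by
        apply Finset.sum_nbij' (i := fun D => B' \ D) (j := fun D => B' \ D)
        · intro D hD
          rw [Finset.mem_filter] at hD ⊢
          obtain ⟨hDQ, ha'D⟩ := hD
          obtain ⟨hDB', hDimg⟩ := hmemQ'.mp hDQ
          refine ⟨?_, Finset.mem_sdiff.mpr ⟨ha', ha'D⟩⟩
          rw [hmemQ']
          refine ⟨Finset.sdiff_subset, ?_⟩
          rw [Finset.image_sdiff _ _ τ.injective, hB'inv, hDimg]
        · intro D hD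
          rw [Finset.mem_filter] at hD ⊢
          obtain ⟨hDQ, ha'D⟩ := hD
          obtain ⟨hDB', hDimg⟩ := hmemQ'.mp hDQ
          constructor
          · rw [hmemQ']
            refine ⟨Finset.sdiff_subset, ?_⟩
            rw [Finset.image_sdiff _ _ τ.injective, hB'inv, hDimg]
          · intro hcon
            exact (Finset.mem_sdiff.mp hcon).2 ha'D
        · intro D hD
          rw [Finset.mem_filter] at hD
          exact hcompl (hmemQ'.mp hD.1).1
        · intro D hD
          rw [Finset.mem_filter] at hD
          exact hcompl (hmemQ'.mp hD.1).1
        · intro D hD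
          rw [Finset.mem_filter] at hD
          rw [hcompl (hmemQ'.mp hD.1).1]
      have hT3 : ∀ D ∈ QQ τ B' a', Fcard (τ ^ 2) (B' \ D) = Fcard (τ ^ 2) D := by
        intro D hD
        obtain ⟨hDB', ha'D, hDimg⟩ := mem_QQ.mp hD
        rw [← hDimg]
        apply Fcard_image
        rw [← Equiv.Perm.coe_mul, ← Equiv.Perm.coe_mul, pow_mul_comm']
      have hQsum : (n' - 1) * ∑ D ∈ Q', Fcard (τ ^ 2) D =
          (2 * n' - 2) * ∑ D ∈ QQ τ B' a', Fcard (τ ^ 2) D := by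
        rw [← Finset.sum_filter_add_sum_filter_not Q' (fun D => a' ∈ D)
          (fun D => Fcard (τ ^ 2) D), hT2, hT1, Finset.sum_congr rfl hT3]
        have hco : 2 * n' - 2 = (n' - 1) * 2 := by omega
        rw [hco]
        ring
      rw [hQsum, ← Finset.mul_sum, add_assoc, ← Nat.mul_add, ← hdec']
      obtain ⟨k, hk⟩ : ∃ k, n' = k + 2 := ⟨n' - 2, by omega⟩
      rw [hk]
      have e1 : 2 * (k + 2) - 2 = 2 * k + 2 := by omega
      have e2 : 2 * (k + 2) - 1 = 2 * k + 3 := by omega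
      rw [e1, e2]
      ring

end CNT


section PowTwo
set_option linter.unusedSectionVars false

variable {α : Type u} [Fintype α] [DecidableEq α]

theorem pow_two_fix_mono (σ : Equiv.Perm α) {x : α} {i j : ℕ} (hij : i ≤ j)
    (h : (σ ^ (2 ^ i : ℕ)) x = x) : (σ ^ (2 ^ j : ℕ)) x = x := by
  have he : (2 : ℕ) ^ j = 2 ^ i * 2 ^ (j - i) := by
    rw [← pow_add]
    congr 1
    omega
  rw [he, pow_mul]
  exact pow_fix h _

theorem sq_pow_eq (σ : Equiv.Perm α) (k : ℕ) :
    ((σ ^ 2) ^ (2 ^ k : ℕ)) = σ ^ (2 ^ (k + 1) : ℕ) := by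
  have e : (2 : ℕ) * 2 ^ k = 2 ^ (k + 1) := by
    rw [pow_succ]
    ring
  rw [← pow_mul, e]

theorem tree_pow_two : ∀ (t : RTree α) (σ : Equiv.Perm α),
    RTree.TEquiv (t.relabel ⇑σ) t →
    ∃ k : ℕ, ∀ x ∈ t.leaves, (σ ^ (2 ^ k : ℕ)) x = x := by
  intro t
  induction t with
  | leaf a =>
    intro σ h
    have h1 := h.leaves_eq
    simp only [RTree.relabel, RTree.leaves] at h1
    have h2 : σ a = a := Multiset.singleton_inj.mp h1
    refine ⟨0, ?_⟩
    intro x hx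
    simp only [RTree.leaves, Multiset.mem_singleton] at hx
    subst hx
    simpa using h2
  | node l r ihl ihr =>
    intro σ h
    cases h with
    | node h1 h2 =>
      obtain ⟨k1, hk1⟩ := ihl σ h1
      obtain ⟨k2, hk2⟩ := ihr σ h2
      refine ⟨max k1 k2, ?_⟩
      intro x hx
      simp only [RTree.leaves, Multiset.mem_add] at hx
      rcases hx with hx | hx
      · exact pow_two_fix_mono σ (le_max_left k1 k2) (hk1 x hx)
      · exact pow_two_fix_mono σ (le_max_right k1 k2) (hk2 x hx)
    | swap h1 h2 =>
      have hcoe2 : ⇑(σ ^ 2) = ⇑σ ∘ ⇑σ := by rw [pow_two, Equiv.Perm.coe_mul]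
      have hl2 : RTree.TEquiv (l.relabel ⇑(σ ^ 2)) l := by
        rw [hcoe2, ← RTree.relabel_relabel]
        exact (h1.relabel_congr ⇑σ).trans h2
      have hr2 : RTree.TEquiv (r.relabel ⇑(σ ^ 2)) r := by
        rw [hcoe2, ← RTree.relabel_relabel]
        exact (h2.relabel_congr ⇑σ).trans h1
      obtain ⟨k1, hk1⟩ := ihl (σ ^ 2) hl2
      obtain ⟨k2, hk2⟩ := ihr (σ ^ 2) hr2
      refine ⟨max k1 k2 + 1, ?_⟩
      intro x hx
      simp only [RTree.leaves, Multiset.mem_add] at hx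
      rcases hx with hx | hx
      · have h3 := hk1 x hx
        rw [sq_pow_eq] at h3
        exact pow_two_fix_mono σ (by omega : k1 + 1 ≤ max k1 k2 + 1) h3
      · have h3 := hk2 x hx
        rw [sq_pow_eq] at h3
        exact pow_two_fix_mono σ (by omega : k2 + 1 ≤ max k1 k2 + 1) h3

theorem h2_of_fixed {σ : Equiv.Perm α}
    (hfix : (fixedTrees σ Finset.univ).Nonempty) :
    ∀ x : α, ∃ k : ℕ, (σ ^ (2 ^ k : ℕ)) x = x := by
  obtain ⟨δ, hδ1, hδ2⟩ := hfix
  revert hδ1 hδ2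
  induction δ using Quot.ind with | _ t =>
  intro hδ1 hδ2
  have ht : RTree.TEquiv (t.relabel ⇑σ) t := PTree.mk_eq_mk.mp hδ2
  obtain ⟨k, hk⟩ := tree_pow_two t σ ht
  intro x
  refine ⟨k, hk x ?_⟩
  have : t.leaves = Finset.univ.val := hδ1
  rw [this]
  exact Finset.mem_val.mpr (Finset.mem_univ x)

end PowTwo


/-- If σ (on a nonempty finite set) fixes some phylogenetic tree and has
more than one cycle, and c is a largest cycle of σ with complement A', then the σ-fixed
phylogenetic trees on A are in bijection with pairs (γ', e) of a σ-fixed (i.e. σ'-fixed)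
phylogenetic tree γ' on A' together with one of its 2|A'| − 1 edges. -/
theorem stmt3 {α : Type} [Fintype α] [DecidableEq α] (hα : Nonempty α)
    (σ : Equiv.Perm α)
    (hfix : (fixedTrees σ Finset.univ).Nonempty)
    (a : α) (hmax : ∀ b, (orbitF σ b).card ≤ (orbitF σ a).card)
    (hmulti : orbitF σ a ≠ Finset.univ)
    (A' : Finset α) (hA' : A' = (orbitF σ a)ᶜ) :
    Nonempty (↥(fixedTrees σ Finset.univ) ≃
      ↥(fixedTrees σ A') × Fin (2 * A'.card - 1)) := by
  have h2 := h2_of_fixed hfix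
  have hcnt := CNT_aux Finset.univ.card σ Finset.univ a rfl (Finset.mem_univ a)
    (fun x _ => Finset.mem_univ _) (fun x _ => h2 x) (fun x _ => hmax x) hmulti
  have hA'eq : Finset.univ \ orbitF σ a = A' := by
    rw [hA', Finset.compl_eq_univ_sdiff]
  rw [hA'eq] at hcnt
  have key : ∀ B : Finset α, Nat.card ↥(fixedTrees σ B) = Fcard σ B := by
    intro B
    rw [Nat.card_coe_set_eq, Set.ncard_eq_toFinset_card _ (fixedTrees_finite σ B)]
    rfl
  haveI i1 := (fixedTrees_finite σ Finset.univ).fintype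
  haveI i2 := (fixedTrees_finite σ A').fintype
  apply Fintype.card_eq.mp
  rw [Fintype.card_prod, Fintype.card_fin, ← Nat.card_eq_fintype_card,
    ← Nat.card_eq_fintype_card, key, key, hcnt]
  ring
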